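/- Let Λ be a chain transitive compact invariant set of a flow with the shadowing property, and let σ ∈ Λ be a hyperbolic singularity such that Λ is nontrivial. Then for any neighborhood U of Λ there is a homoclinic point x ∈ (W^s(σ) ∩ W^u(σ))∖{σ} whose full orbit is contained in U. Moreover if Λ has the intrinsic shadowing property then x can be chosen in Λ. -/

import Mathlib

/- Common setting: the compact manifold is modelled by a finite-dimensional real
inner product space `E`; a `FlowPkg` packages a `C¹` vector field `X`, its flow `φ`,
the tangent flow `Dφ` and the derivative `DX` of the vector field. -/

open scoped RealInnerProductSpace

section Defs

variable (E : Type*) [NormedAddCommGroup E] [InnerProductSpace ℝ E] [FiniteDimensional ℝ E]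

structure FlowPkg where
  X : E → E
  DX : E → E →L[ℝ] E
  φ : ℝ → E → E
  Dφ : ℝ → E → E →L[ℝ] E
  contX : Continuous X
  contφ : Continuous fun p : ℝ × E => φ p.1 p.2
  flow_zero : ∀ x, φ 0 x = x
  flow_add : ∀ s t x, φ (s + t) x = φ s (φ t x)
  deriv_time : ∀ t x, HasDerivAt (fun s => φ s x) (X (φ t x)) t
  deriv_space : ∀ t x, HasFDerivAt (φ t) (Dφ t x) x
  deriv_X : ∀ x, HasFDerivAt X (DX x) x

end Defs

variable {E : Type*} [NormedAddCommGroup E] [InnerProductSpace ℝ E] [FiniteDimensional ℝ E]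

/-- normalization of a vector -/
noncomputable def nrm (v : E) : E := ‖v‖⁻¹ • v

/-- area of the parallelogram spanned by two vectors (norm of `u ∧ v`) -/
noncomputable def area (u v : E) : ℝ := Real.sqrt (‖u‖ ^ 2 * ‖v‖ ^ 2 - ⟪u, v⟫ ^ 2)

namespace FlowPkg

variable (P : FlowPkg E)

def Invariant (Λ : Set E) : Prop := ∀ t : ℝ, ∀ x ∈ Λ, P.φ t x ∈ Λ

def orbit (x : E) : Set E := Set.range fun t : ℝ => P.φ t x

/-- `Λ` is nontrivial if it is not a single orbit -/
def NontrivialSet (Λ : Set E) : Prop := ¬ ∃ x : E, Λ = P.orbit x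

/-- a finite `δ`-pseudo orbit `(x i, T i)`, `0 ≤ i ≤ n`, all times `≥ 1` -/
def IsPseudoOrbit (δ : ℝ) (n : ℕ) (x : ℕ → E) (T : ℕ → ℝ) : Prop :=
  (∀ i < n, 1 ≤ T i) ∧ ∀ i < n, dist (P.φ (T i) (x i)) (x (i + 1)) < δ

/-- a `δ`-pseudo orbit from `a` to `b` -/
def ChainFrom (a b : E) : Prop :=
  ∀ δ > (0:ℝ), ∃ n : ℕ, ∃ x : ℕ → E, ∃ T : ℕ → ℝ,
    0 < n ∧ P.IsPseudoOrbit δ n x T ∧ x 0 = a ∧ x n = b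

def ChainTransitive (Λ : Set E) : Prop :=
  ∀ a ∈ Λ, ∀ b ∈ Λ, ∀ δ > (0:ℝ), ∃ n : ℕ, ∃ x : ℕ → E, ∃ T : ℕ → ℝ,
    0 < n ∧ P.IsPseudoOrbit δ n x T ∧ (∀ i ≤ n, x i ∈ Λ) ∧ x 0 = a ∧ x n = b

/-- the chain recurrent set -/
def CR : Set E := {x | P.ChainFrom x x}

/-- the chain class of a point -/
def ChainClass (σ : E) : Set E := {x | P.ChainFrom σ x ∧ P.ChainFrom x σ}

/-- the orbit of `z` `ε`-shadows (with an increasing reparametrization `θ`) the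
bi-infinite pseudo orbit `(x i)` with accumulated times `s i`. -/
def Shadows (ε : ℝ) (x : ℤ → E) (s : ℤ → ℝ) (z : E) : Prop :=
  ∃ θ : ℝ → ℝ, StrictMono θ ∧ Function.Surjective θ ∧
    ∀ i : ℤ, ∀ t ∈ Set.Icc (s i) (s (i + 1)),
      dist (P.φ (t - s i) (x i)) (P.φ (θ t) z) < ε

/-- the shadowing property on `Λ` -/
def ShadowingOn (Λ : Set E) : Prop :=
  ∀ ε > (0:ℝ), ∃ δ > (0:ℝ), ∀ (x : ℤ → E) (T s : ℤ → ℝ),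
    (∀ i, x i ∈ Λ) → (∀ i, 1 ≤ T i) →
    (∀ i, dist (P.φ (T i) (x i)) (x (i + 1)) < δ) →
    s 0 = 0 → (∀ i, s (i + 1) = s i + T i) →
    ∃ z : E, P.Shadows ε x s z

/-- the intrinsic shadowing property on `Λ`: the shadowing point lies in `Λ` -/
def IntrinsicShadowingOn (Λ : Set E) : Prop :=
  ∀ ε > (0:ℝ), ∃ δ > (0:ℝ), ∀ (x : ℤ → E) (T s : ℤ → ℝ),
    (∀ i, x i ∈ Λ) → (∀ i, 1 ≤ T i) →
    (∀ i, dist (P.φ (T i) (x i)) (x (i + 1)) < δ) →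
    s 0 = 0 → (∀ i, s (i + 1) = s i + T i) →
    ∃ z ∈ Λ, P.Shadows ε x s z

/-- the stable set (stable manifold) of `σ` -/
def Ws (σ : E) : Set E :=
  {x | Filter.Tendsto (fun t : ℝ => P.φ t x) Filter.atTop (nhds σ)}

/-- the unstable set (unstable manifold) of `σ` -/
def Wu (σ : E) : Set E :=
  {x | Filter.Tendsto (fun t : ℝ => P.φ t x) Filter.atBot (nhds σ)}

/-- the strong stable manifold of a singularity `σ`, of contraction rates `< rate`:
points converging to `σ` strictly faster than `e^{rate·t}`. -/
def WssMan (σ : E) (rate : ℝ) : Set E :=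
  {x | ∃ K > (0:ℝ), ∃ r < rate, ∀ t ≥ (0:ℝ), dist (P.φ t x) σ ≤ K * Real.exp (r * t)}

/-- the nonwandering set -/
def NonWandering : Set E :=
  {x | ∀ U ∈ nhds x, ∀ T : ℝ, ∃ t ≥ T, ((P.φ t '' U) ∩ U).Nonempty}

/-- the linear Poincaré flow along the orbit of a regular point `x` -/
noncomputable def psiL (t : ℝ) (x : E) (v : E) : E :=
  P.Dφ t x v - ⟪P.Dφ t x v, nrm (P.X (P.φ t x))⟫ • nrm (P.X (P.φ t x))

/-- the flow induced on the unit sphere bundle by the tangent flow -/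
noncomputable def phiSharp (t : ℝ) (p : E × E) : E × E :=
  (P.φ t p.1, nrm (P.Dφ t p.1 p.2))

/-- the extended linear Poincaré flow on the normal bundle over the sphere bundle -/
noncomputable def psiE (t : ℝ) (p : E × E) (v : E) : E :=
  P.Dφ t p.1 v - ⟪P.Dφ t p.1 v, nrm (P.Dφ t p.1 p.2)⟫ • nrm (P.Dφ t p.1 p.2)

end FlowPkg

/-- a hyperbolic singularity, with its hyperbolic splitting `Es ⊕ Eu` -/
structure HypSing (P : FlowPkg E) (σ : E) where
  Es : Submodule ℝ E
  Eu : Submodule ℝ E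
  zero : P.X σ = 0
  compl : IsCompl Es Eu
  invs : ∀ t : ℝ, ∀ v ∈ Es, P.Dφ t σ v ∈ Es
  invu : ∀ t : ℝ, ∀ v ∈ Eu, P.Dφ t σ v ∈ Eu
  C : ℝ
  lam : ℝ
  hC : 1 ≤ C
  hlam : 0 < lam
  contr : ∀ t ≥ (0:ℝ), ∀ v ∈ Es, ‖P.Dφ t σ v‖ ≤ C * Real.exp (-lam * t) * ‖v‖
  expand : ∀ t ≥ (0:ℝ), ∀ v ∈ Eu, ‖P.Dφ (-t) σ v‖ ≤ C * Real.exp (-lam * t) * ‖v‖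

/-- a hyperbolic periodic orbit through `p` of period `T` -/
structure HypPer (P : FlowPkg E) (p : E) (T : ℝ) where
  hT : 0 < T
  per : P.φ T p = p
  reg : P.X p ≠ 0
  Es : Submodule ℝ E
  Eu : Submodule ℝ E
  compl : Es ⊔ Submodule.span ℝ {P.X p} ⊔ Eu = ⊤
  indep1 : Es ⊓ (Submodule.span ℝ {P.X p} ⊔ Eu) = ⊥
  indep2 : Submodule.span ℝ {P.X p} ⊓ Eu = ⊥
  invs : ∀ v ∈ Es, P.Dφ T p v ∈ Es
  invu : ∀ v ∈ Eu, P.Dφ T p v ∈ Eu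
  C : ℝ
  lam : ℝ
  hC : 1 ≤ C
  hlam : 0 < lam
  contr : ∀ n : ℕ, ∀ v ∈ Es, ‖P.Dφ (n * T) p v‖ ≤ C * Real.exp (-lam * n) * ‖v‖
  expand : ∀ n : ℕ, ∀ v ∈ Eu, ‖P.Dφ (-(n * T)) p v‖ ≤ C * Real.exp (-lam * n) * ‖v‖

/-- positively singular hyperbolic set: dominated splitting `Ess ⊕ Ecu` of the
tangent bundle over `Λ`, `Ess` contracting, `Ecu` area-expanding, all
singularities hyperbolic. -/
structure PosSingHyp (P : FlowPkg E) (Λ : Set E) where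
  Ess : E → Submodule ℝ E
  Ecu : E → Submodule ℝ E
  compl : ∀ x ∈ Λ, IsCompl (Ess x) (Ecu x)
  invs : ∀ t : ℝ, ∀ x ∈ Λ, ∀ v ∈ Ess x, P.Dφ t x v ∈ Ess (P.φ t x)
  invu : ∀ t : ℝ, ∀ x ∈ Λ, ∀ v ∈ Ecu x, P.Dφ t x v ∈ Ecu (P.φ t x)
  C : ℝ
  lam : ℝ
  hC : 1 < C
  hlam : 0 < lam
  dom : ∀ t ≥ (0:ℝ), ∀ x ∈ Λ, ∀ u ∈ Ess x, ∀ v ∈ Ecu (P.φ t x),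
    ‖P.Dφ t x u‖ * ‖P.Dφ (-t) (P.φ t x) v‖ ≤ C * Real.exp (-lam * t) * (‖u‖ * ‖v‖)
  contr : ∀ t ≥ (0:ℝ), ∀ x ∈ Λ, ∀ v ∈ Ess x,
    ‖P.Dφ t x v‖ ≤ C * Real.exp (-lam * t) * ‖v‖
  area_exp : ∀ t ≥ (0:ℝ), ∀ x ∈ Λ, ∀ u ∈ Ecu x, ∀ v ∈ Ecu x,
    area (P.Dφ (-t) x u) (P.Dφ (-t) x v) ≤ C * Real.exp (-lam * t) * area u v
  singHyp : ∀ σ ∈ Λ, P.X σ = 0 → Nonempty (HypSing P σ)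

/-- negatively singular hyperbolic set (positively singular hyperbolic for `-X`) -/
structure NegSingHyp (P : FlowPkg E) (Λ : Set E) where
  Euu : E → Submodule ℝ E
  Ecs : E → Submodule ℝ E
  compl : ∀ x ∈ Λ, IsCompl (Euu x) (Ecs x)
  invs : ∀ t : ℝ, ∀ x ∈ Λ, ∀ v ∈ Euu x, P.Dφ t x v ∈ Euu (P.φ t x)
  invu : ∀ t : ℝ, ∀ x ∈ Λ, ∀ v ∈ Ecs x, P.Dφ t x v ∈ Ecs (P.φ t x)
  C : ℝ
  lam : ℝ
  hC : 1 < C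
  hlam : 0 < lam
  dom : ∀ t ≥ (0:ℝ), ∀ x ∈ Λ, ∀ u ∈ Euu x, ∀ v ∈ Ecs (P.φ (-t) x),
    ‖P.Dφ (-t) x u‖ * ‖P.Dφ t (P.φ (-t) x) v‖ ≤ C * Real.exp (-lam * t) * (‖u‖ * ‖v‖)
  contr : ∀ t ≥ (0:ℝ), ∀ x ∈ Λ, ∀ v ∈ Euu x,
    ‖P.Dφ (-t) x v‖ ≤ C * Real.exp (-lam * t) * ‖v‖
  area_exp : ∀ t ≥ (0:ℝ), ∀ x ∈ Λ, ∀ u ∈ Ecs x, ∀ v ∈ Ecs x,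
    area (P.Dφ t x u) (P.Dφ t x v) ≤ C * Real.exp (-lam * t) * area u v
  singHyp : ∀ σ ∈ Λ, P.X σ = 0 → Nonempty (HypSing P σ)

/-- singular hyperbolic: positively singular hyperbolic for `X` or for `-X` -/
def SingularHyperbolicOn (P : FlowPkg E) (Λ : Set E) : Prop :=
  Nonempty (PosSingHyp P Λ) ∨ Nonempty (NegSingHyp P Λ)

/-- a hyperbolic set: splitting `Es ⊕ ⟨X⟩ ⊕ Eu` with `Es` contracting and `Eu` expanding -/
structure HyperbolicSet (P : FlowPkg E) (Λ : Set E) where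
  Es : E → Submodule ℝ E
  Eu : E → Submodule ℝ E
  compl : ∀ x ∈ Λ, Es x ⊔ Submodule.span ℝ {P.X x} ⊔ Eu x = ⊤
  indep1 : ∀ x ∈ Λ, Es x ⊓ (Submodule.span ℝ {P.X x} ⊔ Eu x) = ⊥
  indep2 : ∀ x ∈ Λ, Submodule.span ℝ {P.X x} ⊓ Eu x = ⊥
  invs : ∀ t : ℝ, ∀ x ∈ Λ, ∀ v ∈ Es x, P.Dφ t x v ∈ Es (P.φ t x)
  invu : ∀ t : ℝ, ∀ x ∈ Λ, ∀ v ∈ Eu x, P.Dφ t x v ∈ Eu (P.φ t x)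
  C : ℝ
  lam : ℝ
  hC : 1 ≤ C
  hlam : 0 < lam
  contr : ∀ t ≥ (0:ℝ), ∀ x ∈ Λ, ∀ v ∈ Es x,
    ‖P.Dφ t x v‖ ≤ C * Real.exp (-lam * t) * ‖v‖
  expand : ∀ t ≥ (0:ℝ), ∀ x ∈ Λ, ∀ v ∈ Eu x,
    ‖P.Dφ (-t) x v‖ ≤ C * Real.exp (-lam * t) * ‖v‖

/-- `C¹` closeness of two vector fields -/
def C1Close (P Q : FlowPkg E) (ε : ℝ) : Prop :=
  ∀ x : E, ‖Q.X x - P.X x‖ + ‖Q.DX x - P.DX x‖ < ε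

/-- a star vector field: all critical elements of all `C¹`-nearby vector fields
are hyperbolic -/
def FlowPkg.Star (P : FlowPkg E) : Prop :=
  ∃ ε > (0:ℝ), ∀ Q : FlowPkg E, C1Close P Q ε →
    (∀ σ : E, Q.X σ = 0 → Nonempty (HypSing Q σ)) ∧
    (∀ p : E, ∀ T : ℝ, 0 < T → Q.φ T p = p → Q.X p ≠ 0 → Nonempty (HypPer Q p T))

/-- a preperiodic point: accumulated by periodic points of `C¹`-nearby vector fields -/
def FlowPkg.PreperiodicPt (P : FlowPkg E) (x : E) : Prop :=
  ∀ ε > (0:ℝ), ∃ Q : FlowPkg E, C1Close P Q ε ∧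
    ∃ p : E, ∃ T : ℝ, 0 < T ∧ Q.φ T p = p ∧ Q.X p ≠ 0 ∧ dist p x < ε

/-- Axiom A: the nonwandering set is hyperbolic and is the closure of the set of
critical elements -/
def FlowPkg.AxiomA (P : FlowPkg E) : Prop :=
  Nonempty (HyperbolicSet P P.NonWandering) ∧
  P.NonWandering =
    closure ({σ : E | P.X σ = 0} ∪ {p : E | ∃ T > (0:ℝ), P.φ T p = p ∧ P.X p ≠ 0})

/-- the no-cycle condition, formulated (as is equivalent for Axiom A flows) as the
coincidence of the chain recurrent set with the nonwandering set -/
def FlowPkg.NoCycle (P : FlowPkg E) : Prop := P.CR = P.NonWandering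

/-- a continuous family of local strong stable disks over `Λ`, invariant and
uniformly contracted at time `T` -/
structure StrongStableFamily (P : FlowPkg E) (Λ : Set E) (T η : ℝ) where
  hT : 0 < T
  hη0 : 0 < η
  hη1 : η < 1
  Wloc : E → Set E
  mem_self : ∀ x ∈ Λ, x ∈ Wloc x
  inv : ∀ x ∈ Λ, P.φ T '' Wloc x ⊆ Wloc (P.φ T x)
  contr : ∀ x ∈ Λ, ∀ y ∈ Wloc x, dist (P.φ T y) (P.φ T x) ≤ η * dist y x

/-- the global strong stable manifold through `x` -/
def StrongStableFamily.Wss {P : FlowPkg E} {Λ : Set E} {T η : ℝ}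
    (F : StrongStableFamily P Λ T η) (x : E) : Set E :=
  ⋃ n : ℕ, P.φ (-(((n : ℝ) + 1) * T)) '' F.Wloc (P.φ (((n : ℝ) + 1) * T) x)

/-- a positively Lorenz-like hyperbolic singularity: splitting `Ess ⊕ Ec ⊕ Eu`
with `dim Ec = 1`, rates `lamss < lams < 0 < lamu` and positive saddle value
`lams + lamu > 0` -/
structure PosLorenzLike (P : FlowPkg E) (σ : E) where
  zero : P.X σ = 0
  Ess : Submodule ℝ E
  Ec : Submodule ℝ E
  Eu : Submodule ℝ E
  dimc : Module.finrank ℝ Ec = 1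
  compl : Ess ⊔ Ec ⊔ Eu = ⊤
  indep1 : Ess ⊓ (Ec ⊔ Eu) = ⊥
  indep2 : Ec ⊓ Eu = ⊥
  invss : ∀ t : ℝ, ∀ v ∈ Ess, P.Dφ t σ v ∈ Ess
  invc : ∀ t : ℝ, ∀ v ∈ Ec, P.Dφ t σ v ∈ Ec
  invu : ∀ t : ℝ, ∀ v ∈ Eu, P.Dφ t σ v ∈ Eu
  C : ℝ
  lamss : ℝ
  lams : ℝ
  lamu : ℝ
  hC : 1 ≤ C
  hss : lamss < lams
  hs : lams < 0
  hu : 0 < lamu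
  saddle : 0 < lams + lamu
  contr_ss : ∀ t ≥ (0:ℝ), ∀ v ∈ Ess, ‖P.Dφ t σ v‖ ≤ C * Real.exp (lamss * t) * ‖v‖
  contr_c : ∀ t ≥ (0:ℝ), ∀ v ∈ Ec, ‖P.Dφ t σ v‖ ≤ C * Real.exp (lams * t) * ‖v‖
  lower_c : ∀ t ≥ (0:ℝ), ∀ v ∈ Ec, ‖v‖ ≤ C * Real.exp (-lams * t) * ‖P.Dφ t σ v‖
  expand_u : ∀ t ≥ (0:ℝ), ∀ v ∈ Eu, ‖P.Dφ (-t) σ v‖ ≤ C * Real.exp (-lamu * t) * ‖v‖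

/-- multisingular hyperbolicity (Bonatti–da Luz): dominated splitting of the
normal bundle over the compact lifted set `B ⊂ SM` for the extended linear
Poincaré flow, with reparametrizing cocycles `h σ` making the two subbundles
uniformly contracted/expanded -/
structure MultiSingHyp (P : FlowPkg E) (Λ : Set E) where
  singHyp : ∀ σ ∈ Λ, P.X σ = 0 → Nonempty (HypSing P σ)
  B : Set (E × E)
  hBcompact : IsCompact B
  hBunit : ∀ p ∈ B, ‖p.2‖ = 1
  hBinv : ∀ t : ℝ, ∀ p ∈ B, P.phiSharp t p ∈ B
  hBflow : ∀ x ∈ Λ, P.X x ≠ 0 → (x, nrm (P.X x)) ∈ B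
  hBbase : ∀ p ∈ B, p.1 ∈ Λ
  Δs : E × E → Submodule ℝ E
  Δu : E × E → Submodule ℝ E
  perp : ∀ p ∈ B, (∀ v ∈ Δs p, ⟪v, p.2⟫ = 0) ∧ (∀ v ∈ Δu p, ⟪v, p.2⟫ = 0)
  span : ∀ p ∈ B, Δs p ⊔ Δu p ⊔ Submodule.span ℝ {p.2} = ⊤
  indep : ∀ p ∈ B, Δs p ⊓ Δu p = ⊥
  invs : ∀ t : ℝ, ∀ p ∈ B, ∀ v ∈ Δs p, P.psiE t p v ∈ Δs (P.phiSharp t p)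
  invu : ∀ t : ℝ, ∀ p ∈ B, ∀ v ∈ Δu p, P.psiE t p v ∈ Δu (P.phiSharp t p)
  idx : ℕ
  hidx : ∀ p ∈ B, Module.finrank ℝ (Δs p) = idx
  Cdom : ℝ
  lamdom : ℝ
  hCdom : 1 ≤ Cdom
  hlamdom : 0 < lamdom
  dom : ∀ t ≥ (0:ℝ), ∀ p ∈ B, ∀ u ∈ Δs p, ∀ v ∈ Δu (P.phiSharp t p),
    ‖P.psiE t p u‖ * ‖P.psiE (-t) (P.phiSharp t p) v‖ ≤
      Cdom * Real.exp (-lamdom * t) * (‖u‖ * ‖v‖)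
  Splus : Finset E
  Sminus : Finset E
  hSp : ↑Splus ⊆ {σ ∈ Λ | P.X σ = 0}
  hSm : ↑Sminus ⊆ {σ ∈ Λ | P.X σ = 0}
  h : E → E × E → ℝ → ℝ
  hpos : ∀ σ p t, 0 < h σ p t
  hcoc : ∀ σ : E, (σ ∈ Splus ∨ σ ∈ Sminus) → ∀ p ∈ B, ∀ t s : ℝ,
    h σ p (t + s) = h σ p t * h σ (P.phiSharp t p) s
  C : ℝ
  lam : ℝ
  hC : 1 ≤ C
  hlam : 0 < lam
  contr_s : ∀ t ≥ (0:ℝ), ∀ p ∈ B, ∀ v ∈ Δs p,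
    (∏ σ ∈ Splus, h σ p t) * ‖P.psiE t p v‖ ≤ C * Real.exp (-lam * t) * ‖v‖
  contr_u : ∀ t ≥ (0:ℝ), ∀ p ∈ B, ∀ v ∈ Δu p,
    (∏ σ ∈ Sminus, h σ p (-t)) * ‖P.psiE (-t) p v‖ ≤ C * Real.exp (-lam * t) * ‖v‖

/-!
The hyperbolic singularity `σ` is a fixed point of the flow, and for large `N` the splitting of
its linearisation makes `σ` a hyperbolic fixed point of the time-`N` map. A cone argument for the
stable and unstable components then shows that a point whose forward (backward) orbit stays close
enough to `σ` lies in `W^s(σ)` (`W^u(σ)`); the unstable case is the stable one for the reversed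
flow.

Chain transitivity gives, for every `δ`, `δ`-pseudo orbits in `Λ` from `σ` to a point `p ≠ σ` and
back; continued by `σ` on both sides they form a bi-infinite `δ`-pseudo orbit. A true orbit
`ε`-shadowing it stays `ε`-close to `σ` in both time directions, so it is homoclinic to `σ`; it
passes `ε`-close to `p`, so it is not `σ`; and it stays `ε`-close to `Λ`, so it lies in `U`.
-/

section Homoclinic

open Filter Topology Set

theorem eq_of_hasDerivAt_of_norm_le_near {F : Type*} [NormedAddCommGroup F] [NormedSpace ℝ F]
    {g v : ℝ → F} {σ : F} {K r : ℝ} (hr : 0 < r)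
    (hg0 : g 0 = σ) (hder : ∀ t, HasDerivAt g (v t) t)
    (hv : ∀ t, dist (g t) σ < r → ‖v t‖ ≤ K * ‖g t - σ‖) {t : ℝ} (ht : 0 ≤ t) : g t = σ := by
  have hcont : Continuous g := continuous_iff_continuousAt.2 fun t => (hder t).continuousAt
  refine IsClosed.Icc_subset_of_forall_mem_nhdsWithin (b := t)
    ((isClosed_eq hcont continuous_const).inter isClosed_Icc) hg0 ?_ ⟨ht, le_rfl⟩
  rintro a ⟨ha, -⟩
  obtain ⟨h, hh, hnear⟩ := Metric.eventually_nhds_iff.1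
    (hcont.continuousAt.eventually (Metric.ball_mem_nhds (g a) hr))
  -- on `[a, a + h/2]` the curve stays `r`-close to `σ`, so Grönwall's bound starting from `0` is `0`
  have hgron := norm_le_gronwallBound_of_norm_deriv_right_le (f := fun s => g s - σ) (f' := v)
    (δ := 0) (ε := 0) (a := a) (b := a + h / 2) (hcont.sub continuous_const).continuousOn
    (fun s _ => ((hder s).sub_const σ).hasDerivWithinAt) (by simp [show g a = σ from ha])
    fun s hs => by
      have hs' : dist s a < h := by
        rw [Real.dist_eq, abs_of_nonneg (by linarith [hs.1])]; linarith [hs.2]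
      simpa [ha] using hv s (by simpa [show g a = σ from ha] using hnear hs')
  filter_upwards [Icc_mem_nhdsGT (by linarith : a < a + h / 2)] with s hs
  simpa [gronwallBound_ε0_δ0, sub_eq_zero] using hgron s hs

theorem Submodule.projection_apply_comm {R M : Type*} [Ring R] [AddCommGroup M] [Module R M]
    {p q : Submodule R M} (hpq : IsCompl p q) {L : M →ₗ[R] M} (hp : ∀ v ∈ p, L v ∈ p)
    (hq : ∀ v ∈ q, L v ∈ q) (x : M) : p.projection q hpq (L x) = L (p.projection q hpq x) := by
  conv_lhs => rw [← projection_add_projection_eq_self hpq x]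
  rw [map_add, map_add, projection_apply_of_mem_left hpq (hp _ (projection_apply_mem hpq x)),
    projection_apply_of_mem_right hpq (hq _ (projection_apply_mem hpq.symm x)), add_zero]

theorem le_of_cone_estimates {a b : ℕ → ℝ} {M : ℝ} (ha : ∀ n, 0 ≤ a n) (hbM : ∀ n, b n ≤ M)
    (hs : ∀ n, a (n + 1) ≤ a n / 4 + (a n + b n) / 8)
    (hu : ∀ n, 4 * b n - (a n + b n) / 8 ≤ b (n + 1)) (n : ℕ) : b n ≤ a n := by
  by_contra! hn
  have hcone : ∀ k, a (n + k) < b (n + k) := by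
    intro k
    induction k with
    | zero => exact hn
    | succ k ih =>
      have := hs (n + k); have := hu (n + k); have := ha (n + k)
      rw [← add_assoc]; linarith
  have hgrow : Tendsto (fun k => b (n + k)) atTop atTop :=
    tendsto_atTop_of_geom_le (c := 3) (by simpa using (ha n).trans_lt hn) (by norm_num) fun k => by
      have := hcone k; have := hu (n + k); have := ha (n + k)
      rw [← add_assoc]; linarith
  obtain ⟨k, hk⟩ := (hgrow.eventually_gt_atTop M).exists
  exact (hbM (n + k)).not_gt hk

section

variable {F : Type*} [NormedAddCommGroup F] [NormedSpace ℝ F] [FiniteDimensional ℝ F]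

theorem tendsto_zero_of_hyperbolic {Es Eu : Submodule ℝ F} (hc : IsCompl Es Eu) {L : F →L[ℝ] F}
    (hLs : ∀ v ∈ Es, L v ∈ Es) (hLu : ∀ v ∈ Eu, L v ∈ Eu)
    (hcontr : ∀ v ∈ Es, ‖L v‖ ≤ ‖v‖ / 4) (hexp : ∀ v ∈ Eu, 4 * ‖v‖ ≤ ‖L v‖) :
    ∃ η > 0, ∀ y : ℕ → F, (∃ M, ∀ n, ‖y n‖ ≤ M) →
      (∀ n, ‖y (n + 1) - L (y n)‖ ≤ η * ‖y n‖) → Tendsto y atTop (𝓝 0) := by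
  set πs := Es.projection Eu hc
  set πu := Eu.projection Es hc.symm
  obtain ⟨cs, hcs, hπs⟩ := (LinearMap.toContinuousLinearMap πs).bound
  obtain ⟨cu, hcu, hπu⟩ := (LinearMap.toContinuousLinearMap πu).bound
  set c := max cs cu
  have hc0 : 0 < c := lt_max_of_lt_left hcs
  refine ⟨(8 * c)⁻¹, by positivity, fun y ⟨M, hM⟩ hy => ?_⟩
  set a := fun n => ‖πs (y n)‖
  set b := fun n => ‖πu (y n)‖
  have hyab : ∀ n, ‖y n‖ ≤ a n + b n := fun n => by
    conv_lhs => rw [← Submodule.projection_add_projection_eq_self hc (y n)]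
    exact norm_add_le _ _
  set e := fun n => y (n + 1) - L (y n)
  have herr : ∀ n, ‖πs (e n)‖ ≤ (a n + b n) / 8 ∧ ‖πu (e n)‖ ≤ (a n + b n) / 8 := fun n => by
    have hηc : c * ((8 * c)⁻¹ * ‖y n‖) = ‖y n‖ / 8 := by field_simp
    have h1 : c * ‖e n‖ ≤ (a n + b n) / 8 := by
      calc c * ‖e n‖ ≤ c * ((8 * c)⁻¹ * ‖y n‖) := by gcongr; exact hy n
        _ ≤ (a n + b n) / 8 := by rw [hηc]; linarith [hyab n]
    constructor
    · exact ((hπs _).trans (by gcongr; exact le_max_left _ _)).trans h1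
    · exact ((hπu _).trans (by gcongr; exact le_max_right _ _)).trans h1
  have hstep : ∀ n, y (n + 1) = L (y n) + e n := fun n => by simp [e]
  have hcomm_s : ∀ x, πs (L x) = L (πs x) := Submodule.projection_apply_comm hc hLs hLu
  have hcomm_u : ∀ x, πu (L x) = L (πu x) := Submodule.projection_apply_comm hc.symm hLu hLs
  have hs : ∀ n, a (n + 1) ≤ a n / 4 + (a n + b n) / 8 := fun n => by
    have h1 : a (n + 1) ≤ ‖L (πs (y n))‖ + ‖πs (e n)‖ := by
      show ‖πs (y (n + 1))‖ ≤ _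
      rw [hstep, map_add, hcomm_s]
      exact norm_add_le _ _
    have h2 : ‖L (πs (y n))‖ ≤ a n / 4 := hcontr _ (Submodule.projection_apply_mem hc _)
    linarith [(herr n).1]
  have hu : ∀ n, 4 * b n - (a n + b n) / 8 ≤ b (n + 1) := fun n => by
    have h1 : ‖L (πu (y n))‖ - ‖πu (e n)‖ ≤ b (n + 1) := by
      show _ ≤ ‖πu (y (n + 1))‖
      rw [hstep, map_add, hcomm_u]
      exact norm_sub_le_norm_add _ _
    have h2 : 4 * b n ≤ ‖L (πu (y n))‖ := hexp _ (Submodule.projection_apply_mem hc.symm _)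
    linarith [(herr n).2]
  have hcone : ∀ n, b n ≤ a n := le_of_cone_estimates (fun n => norm_nonneg _) (M := cu * M)
    (fun n => (hπu _).trans (by gcongr; exact hM n)) hs hu
  have hgeom : ∀ n, a n ≤ (1 / 2) ^ n * a 0 := fun n =>
    le_geom (by norm_num) n fun k _ => by linarith [hs k, hcone k]
  refine squeeze_zero_norm (a := fun n => 2 * ((1 / 2) ^ n * a 0))
    (fun n => (hyab n).trans (by linarith [hcone n, hgeom n])) ?_
  simpa using ((tendsto_pow_atTop_nhds_zero_of_lt_one (r := (1 / 2 : ℝ)) (by norm_num)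
    (by norm_num)).mul_const (a 0)).const_mul 2

theorem tendsto_iterate_of_hyperbolic_fixedPoint {f : F → F} {σ : F} {L : F →L[ℝ] F}
    (hf : HasFDerivAt f L σ) (hfσ : f σ = σ) {Es Eu : Submodule ℝ F} (hc : IsCompl Es Eu)
    (hLs : ∀ v ∈ Es, L v ∈ Es) (hLu : ∀ v ∈ Eu, L v ∈ Eu)
    (hcontr : ∀ v ∈ Es, ‖L v‖ ≤ ‖v‖ / 4) (hexp : ∀ v ∈ Eu, 4 * ‖v‖ ≤ ‖L v‖) :
    ∃ ρ > 0, ∀ x, (∀ n, dist (f^[n] x) σ ≤ ρ) → Tendsto (fun n => f^[n] x) atTop (𝓝 σ) := by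
  obtain ⟨η, hη, hlin⟩ := tendsto_zero_of_hyperbolic hc hLs hLu hcontr hexp
  obtain ⟨ρ, hρ, hball⟩ := Metric.eventually_nhds_iff.1 (hf.isLittleO.def hη)
  refine ⟨ρ / 2, by positivity, fun x hx => ?_⟩
  have hnear : ∀ n, dist (f^[n] x) σ < ρ := fun n => (hx n).trans_lt (by linarith)
  refine tendsto_sub_nhds_zero_iff.1 (hlin _ ⟨ρ, fun n => ?_⟩ fun n => ?_)
  · simpa [dist_eq_norm] using (hnear n).le
  · simpa [Function.iterate_succ_apply', hfσ] using hball (hnear n)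

end

namespace FlowPkg

variable {F : Type*} [NormedAddCommGroup F] [InnerProductSpace ℝ F] (P : FlowPkg F)

def reverse : FlowPkg F where
  X x := -P.X x
  DX x := -P.DX x
  φ t := P.φ (-t)
  Dφ t := P.Dφ (-t)
  contX := P.contX.neg
  contφ := P.contφ.comp (continuous_fst.neg.prodMk continuous_snd)
  flow_zero x := by simpa using P.flow_zero x
  flow_add s t x := by rw [neg_add]; exact P.flow_add (-s) (-t) x
  deriv_time t x := by
    simpa [Function.comp_def] using (P.deriv_time (-t) x).scomp t (hasDerivAt_neg t)
  deriv_space t x := P.deriv_space (-t) x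
  deriv_X x := (P.deriv_X x).neg

@[simp] theorem reverse_φ (t : ℝ) (x : F) : P.reverse.φ t x = P.φ (-t) x := rfl

@[simp] theorem reverse_X (x : F) : P.reverse.X x = -P.X x := rfl

@[simp] theorem reverse_Dφ (t : ℝ) (x : F) : P.reverse.Dφ t x = P.Dφ (-t) x := rfl

theorem flow_eq_self_of_X_eq_zero {σ : F} (hσ : P.X σ = 0) (t : ℝ) : P.φ t σ = σ := by
  have hfwd : ∀ Q : FlowPkg F, Q.X σ = 0 → ∀ t ≥ 0, Q.φ t σ = σ := fun Q hQ t ht => by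
    obtain ⟨K, hK⟩ := (Q.deriv_X σ).isBigO_sub.bound
    obtain ⟨r, hr, hball⟩ := Metric.eventually_nhds_iff.1 hK
    exact eq_of_hasDerivAt_of_norm_le_near hr (Q.flow_zero σ) (fun s => Q.deriv_time s σ)
      (fun s hs => by simpa [hQ] using hball hs) ht
  rcases le_total 0 t with ht | ht
  · exact hfwd P hσ t ht
  · simpa using hfwd P.reverse (by simp [hσ]) (-t) (by linarith)

theorem iterate_φ (s : ℝ) (n : ℕ) (x : F) : (P.φ s)^[n] x = P.φ (n * s) x := by
  induction n with
  | zero => simp [P.flow_zero]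
  | succ n ih => rw [Function.iterate_succ_apply', ih, ← P.flow_add]; push_cast; ring_nf

theorem Dφ_neg_apply_Dφ {σ : F} (hfix : ∀ t, P.φ t σ = σ) (t : ℝ) (v : F) :
    P.Dφ (-t) σ (P.Dφ t σ v) = v := by
  have hcomp : HasFDerivAt (fun x => P.φ (-t) (P.φ t x)) ((P.Dφ (-t) σ).comp (P.Dφ t σ)) σ := by
    have h : HasFDerivAt (P.φ (-t)) (P.Dφ (-t) σ) (P.φ t σ) := by
      rw [hfix]; exact P.deriv_space (-t) σ
    exact h.comp σ (P.deriv_space t σ)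
  have hid : (fun x => P.φ (-t) (P.φ t x)) = id :=
    funext fun x => by rw [← P.flow_add, neg_add_cancel, P.flow_zero, id]
  rw [hid] at hcomp
  exact DFunLike.congr_fun (hcomp.unique (hasFDerivAt_id σ)) v

theorem tendsto_atTop_of_tendsto_nat_mul {σ : F} (hfix : ∀ t, P.φ t σ = σ) {N : ℝ} (hN : 0 < N)
    {w : F} (h : Tendsto (fun n : ℕ => P.φ (n * N) w) atTop (𝓝 σ)) :
    Tendsto (fun t => P.φ t w) atTop (𝓝 σ) := by
  rw [tendsto_def]
  intro V hV
  have hK : ∀ᶠ y in 𝓝 σ, ∀ r ∈ Icc 0 N, P.φ r y ∈ V :=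
    isCompact_Icc.eventually_forall_of_forall_eventually fun r _ =>
      (P.contφ.comp continuous_swap).continuousAt.preimage_mem_nhds (by simpa [hfix r] using hV)
  have hfloor : Tendsto (fun t => ⌊t / N⌋₊) atTop atTop :=
    tendsto_nat_floor_atTop.comp (tendsto_id.atTop_div_const hN)
  filter_upwards [hfloor.eventually (h.eventually hK), eventually_ge_atTop (0 : ℝ)] with t ht ht0
  have h1 : ⌊t / N⌋₊ * N ≤ t := (le_div_iff₀ hN).1 (Nat.floor_le (div_nonneg ht0 hN.le))
  have h2 : t < (⌊t / N⌋₊ + 1) * N := (div_lt_iff₀ hN).1 (Nat.lt_floor_add_one _)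
  simpa [← P.flow_add] using ht (t - ⌊t / N⌋₊ * N) ⟨by linarith, by linarith⟩

end FlowPkg

namespace HypSing

variable {F : Type*} [NormedAddCommGroup F] [InnerProductSpace ℝ F] {P : FlowPkg F} {σ : F}

def reverse (hs : HypSing P σ) : HypSing P.reverse σ where
  Es := hs.Eu
  Eu := hs.Es
  zero := by simp [hs.zero]
  compl := hs.compl.symm
  invs t v hv := hs.invu (-t) v hv
  invu t v hv := hs.invs (-t) v hv
  C := hs.C
  lam := hs.lam
  hC := hs.hC
  hlam := hs.hlam
  contr := hs.expand
  expand t ht v hv := by simpa using hs.contr t ht v hv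

theorem exists_rate_le_quarter (hs : HypSing P σ) :
    ∃ N > 0, hs.C * Real.exp (-hs.lam * N) ≤ 1 / 4 := by
  have h : Tendsto (fun t => hs.C * Real.exp (-hs.lam * t)) atTop (𝓝 0) := by
    simpa using (Real.tendsto_exp_neg_atTop_nhds_zero.comp
      (tendsto_id.const_mul_atTop hs.hlam)).const_mul hs.C
  obtain ⟨N, hN, hN0⟩ :=
    ((h.eventually (ge_mem_nhds (by norm_num : (0 : ℝ) < 1 / 4))).and
      (eventually_gt_atTop 0)).exists
  exact ⟨N, hN0, hN⟩

variable [FiniteDimensional ℝ F]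

theorem exists_forall_eventually_dist_le_mem_Ws (hs : HypSing P σ) :
    ∃ ρ > 0, ∀ w, (∀ᶠ t in atTop, dist (P.φ t w) σ ≤ ρ) → w ∈ P.Ws σ := by
  have hfix := P.flow_eq_self_of_X_eq_zero hs.zero
  obtain ⟨N, hN, hCN⟩ := hs.exists_rate_le_quarter
  have hrate : ∀ v : F, hs.C * Real.exp (-hs.lam * N) * ‖v‖ ≤ ‖v‖ / 4 := fun v => by
    nlinarith [norm_nonneg v]
  obtain ⟨ρ, hρ, hloc⟩ := tendsto_iterate_of_hyperbolic_fixedPoint (P.deriv_space N σ) (hfix N)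
    hs.compl (hs.invs N) (hs.invu N) (fun v hv => (hs.contr N hN.le v hv).trans (hrate v))
    fun v hv => by
      have := (hs.expand N hN.le _ (hs.invu N v hv)).trans (hrate _)
      rw [P.Dφ_neg_apply_Dφ hfix] at this
      linarith
  refine ⟨ρ, hρ, fun w hw => ?_⟩
  obtain ⟨t₀, ht₀⟩ := eventually_atTop.1 hw
  have hw₀ : Tendsto (fun t => P.φ t (P.φ t₀ w)) atTop (𝓝 σ) := by
    refine P.tendsto_atTop_of_tendsto_nat_mul hfix hN ?_
    simp_rw [← P.iterate_φ]
    refine hloc _ fun n => ?_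
    rw [P.iterate_φ, ← P.flow_add]
    exact ht₀ _ (le_add_of_nonneg_left (by positivity))
  refine (hw₀.comp (tendsto_atTop_add_const_right atTop (-t₀) tendsto_id)).congr fun t => ?_
  simp [← P.flow_add]

theorem exists_forall_eventually_dist_le_mem_Wu (hs : HypSing P σ) :
    ∃ ρ > 0, ∀ w, (∀ᶠ t in atBot, dist (P.φ t w) σ ≤ ρ) → w ∈ P.Wu σ := by
  obtain ⟨ρ, hρ, h⟩ := hs.reverse.exists_forall_eventually_dist_le_mem_Ws
  refine ⟨ρ, hρ, fun w hw => ?_⟩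
  have := (h w (tendsto_neg_atTop_atBot.eventually hw)).comp tendsto_neg_atBot_atTop
  simpa [Function.comp_def, FlowPkg.Wu] using this

end HypSing

theorem exists_cumulative_sum (T : ℤ → ℝ) : ∃ s : ℤ → ℝ, s 0 = 0 ∧ ∀ i, s (i + 1) = s i + T i := by
  refine ⟨fun i => ∑ j ∈ Finset.Ico 0 i, T j - ∑ j ∈ Finset.Ico i 0, T j, by simp, fun i => ?_⟩
  dsimp only
  rcases le_or_gt 0 i with hi | hi
  · rw [← Finset.sum_Ico_add_eq_sum_Ico_add_one hi, Finset.Ico_eq_empty_of_le hi,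
      Finset.Ico_eq_empty_of_le (show 0 ≤ i + 1 by omega)]
    ring
  · rw [← Finset.insert_Ico_add_one_left_eq_Ico hi, Finset.sum_insert (by simp),
      Finset.Ico_eq_empty_of_le hi.le, Finset.Ico_eq_empty_of_le (show i + 1 ≤ 0 by omega)]
    ring

theorem exists_mem_Ico_of_add_one_le {s : ℤ → ℝ} (hs : ∀ i, s i + 1 ≤ s (i + 1)) (t : ℝ) :
    ∃ i, t ∈ Ico (s i) (s (i + 1)) := by
  have hmono : Monotone fun i : ℤ => s i - i :=
    monotone_int_of_le_succ fun i => by push_cast; linarith [hs i]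
  have hlow : ∀ i : ℤ, 0 ≤ i → s 0 + i ≤ s i := fun i hi => by
    have := hmono hi
    simp only [Int.cast_zero, sub_zero] at this
    linarith
  have hup : ∀ i : ℤ, i ≤ 0 → s i ≤ s 0 + i := fun i hi => by
    have := hmono hi
    simp only [Int.cast_zero, sub_zero] at this
    linarith
  obtain ⟨i, hi, hmax⟩ := Int.exists_greatest_of_bdd (P := fun i => s i ≤ t)
    ⟨max 0 ⌈t - s 0⌉, fun i hi => by
      by_contra! h
      have : (⌈t - s 0⌉ : ℝ) < i := by exact_mod_cast (le_max_right _ _).trans_lt h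
      linarith [hlow i (by omega), Int.le_ceil (t - s 0)]⟩
    ⟨min 0 ⌊t - s 0⌋, by
      have : ((min 0 ⌊t - s 0⌋ : ℤ) : ℝ) ≤ ⌊t - s 0⌋ := by exact_mod_cast min_le_right _ _
      linarith [hup _ (min_le_left 0 ⌊t - s 0⌋), Int.floor_le (t - s 0)]⟩
  exact ⟨i, hi, not_le.1 fun h => by have := hmax _ h; omega⟩

namespace FlowPkg

variable {F : Type*} [NormedAddCommGroup F] [InnerProductSpace ℝ F] {P : FlowPkg F}

theorem IsPseudoOrbit.append {δ : ℝ} {n₁ n₂ : ℕ} {x y : ℕ → F} {T S : ℕ → ℝ}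
    (hx : P.IsPseudoOrbit δ n₁ x T) (hy : P.IsPseudoOrbit δ n₂ y S) (hxy : x n₁ = y 0) :
    P.IsPseudoOrbit δ (n₁ + n₂) (fun i => if i ≤ n₁ then x i else y (i - n₁))
      (fun i => if i < n₁ then T i else S (i - n₁)) := by
  have hright : ∀ i, n₁ ≤ i → (if i ≤ n₁ then x i else y (i - n₁)) = y (i - n₁) := fun i hi => by
    split_ifs with h
    · rw [show i = n₁ by omega, hxy, Nat.sub_self]
    · rfl
  refine ⟨fun i hi => ?_, fun i hi => ?_⟩
  · dsimp only
    split_ifs with h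
    · exact hx.1 i h
    · exact hy.1 _ (by omega)
  · by_cases h : i < n₁
    · simp only [h, if_true, h.le, show i + 1 ≤ n₁ from h]
      exact hx.2 i h
    · simp only [h, if_false]
      rw [hright i (by omega), hright (i + 1) (by omega), show i + 1 - n₁ = i - n₁ + 1 by omega]
      exact hy.2 _ (by omega)

/-- Clamping the index continues a finite pseudo orbit from the fixed point `σ` to itself
by `σ` on both sides. -/
theorem IsPseudoOrbit.dist_extend_lt {δ : ℝ} {m : ℕ} {x : ℕ → F} {T : ℕ → ℝ}
    (hx : P.IsPseudoOrbit δ m x T) {σ : F} (hfix : P.φ 1 σ = σ) (h0 : x 0 = σ) (hm : x m = σ)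
    (hδ : 0 < δ) (i : ℤ) :
    dist (P.φ (if 0 ≤ i ∧ i < m then T i.toNat else 1) (x (min i.toNat m)))
      (x (min (i + 1).toNat m)) < δ := by
  split_ifs with hi
  · rw [min_eq_left (by omega), min_eq_left (by omega), show (i + 1).toNat = i.toNat + 1 by omega]
    exact hx.2 _ (by omega)
  · have hσ : ∀ j : ℤ, j ≤ 0 ∨ (m : ℤ) ≤ j → x (min j.toNat m) = σ := by
      rintro j (hj | hj)
      · rw [show j.toNat = 0 by omega, Nat.zero_min, h0]
      · rw [min_eq_right (by omega), hm]
    rw [hσ i (by omega), hσ (i + 1) (by omega), hfix, dist_self]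
    exact hδ

theorem exists_homoclinic_pseudoOrbit {Λ : Set F} (hct : P.ChainTransitive Λ) {σ p : F}
    (hσ : σ ∈ Λ) (hfix : ∀ t, P.φ t σ = σ) (hp : p ∈ Λ) {δ : ℝ} (hδ : 0 < δ) :
    ∃ (x : ℤ → F) (T : ℤ → ℝ) (m n : ℤ), (∀ i, x i ∈ Λ) ∧ (∀ i, 1 ≤ T i) ∧
      (∀ i, dist (P.φ (T i) (x i)) (x (i + 1)) < δ) ∧ (∀ i ≤ 0, x i = σ) ∧
      (∀ i, m ≤ i → x i = σ) ∧ x n = p := by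
  obtain ⟨n₁, x₁, T₁, -, h₁, hΛ₁, h₁0, h₁n⟩ := hct σ hσ p hp δ hδ
  obtain ⟨n₂, x₂, T₂, hn₂, h₂, hΛ₂, h₂0, h₂n⟩ := hct p hp σ hσ δ hδ
  set x := fun i => if i ≤ n₁ then x₁ i else x₂ (i - n₁)
  set T := fun i => if i < n₁ then T₁ i else T₂ (i - n₁)
  set m := n₁ + n₂
  have hx : P.IsPseudoOrbit δ m x T := h₁.append h₂ (h₁n.trans h₂0.symm)
  have hx0 : x 0 = σ := by simp [x, h₁0]
  have hxm : x m = σ := by simp [x, m, show ¬n₁ + n₂ ≤ n₁ by omega, h₂n]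
  have hxΛ : ∀ j ≤ m, x j ∈ Λ := fun j hj => by
    simp only [x]
    split_ifs with h
    · exact hΛ₁ j h
    · exact hΛ₂ _ (by omega)
  refine ⟨fun i => x (min i.toNat m), fun i => if 0 ≤ i ∧ i < m then T i.toNat else 1, m, n₁,
    fun i => hxΛ _ (min_le_right _ _), fun i => ?_, hx.dist_extend_lt (hfix 1) hx0 hxm hδ,
    fun i hi => ?_, fun i hi => ?_, ?_⟩
  · dsimp only
    split_ifs with hi
    · exact hx.1 _ (by omega)
    · exact le_rfl
  · dsimp only
    rw [show i.toNat = 0 by omega, Nat.zero_min, hx0]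
  · dsimp only
    rw [min_eq_right (by omega), hxm]
  · simp [x, m, h₁n]

theorem NontrivialSet.exists_ne {Λ : Set F} (hnt : P.NontrivialSet Λ) {σ : F} (hσ : σ ∈ Λ)
    (hfix : ∀ t, P.φ t σ = σ) : ∃ p ∈ Λ, p ≠ σ := by
  by_contra! h
  refine hnt ⟨σ, Set.ext fun y => ⟨fun hy => ⟨0, show P.φ 0 σ = y by rw [P.flow_zero, h y hy]⟩, ?_⟩⟩
  rintro ⟨t, rfl⟩
  simpa [hfix t] using hσ

end FlowPkg

namespace FlowPkg.Shadows

variable {F : Type*} [NormedAddCommGroup F] [InnerProductSpace ℝ F] {P : FlowPkg F}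
  {ε : ℝ} {x : ℤ → F} {s : ℤ → ℝ} {z : F}

theorem exists_index (h : P.Shadows ε x s z) (hs : ∀ i, s i + 1 ≤ s (i + 1)) :
    ∃ θ : ℝ → ℝ, StrictMono θ ∧ ∀ u, ∃ i t, s i ≤ t ∧ t < s (i + 1) ∧ θ t = u ∧
      dist (P.φ (t - s i) (x i)) (P.φ u z) < ε := by
  obtain ⟨θ, hθ, hsurj, hd⟩ := h
  refine ⟨θ, hθ, fun u => ?_⟩
  obtain ⟨t, rfl⟩ := hsurj u
  obtain ⟨i, hi⟩ := exists_mem_Ico_of_add_one_le hs t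
  exact ⟨i, t, hi.1, hi.2, rfl, hd i t (Ico_subset_Icc_self hi)⟩

theorem eventually_atTop_dist_lt (h : P.Shadows ε x s z) (hs : ∀ i, s i + 1 ≤ s (i + 1))
    {σ : F} (hfix : ∀ t, P.φ t σ = σ) {m : ℤ} (hx : ∀ i, m ≤ i → x i = σ) :
    ∀ᶠ u in atTop, dist (P.φ u z) σ < ε := by
  obtain ⟨θ, hθ, hidx⟩ := h.exists_index hs
  have hsm : StrictMono s := strictMono_int_of_lt_succ fun i => by linarith [hs i]
  filter_upwards [eventually_ge_atTop (θ (s m))] with u hu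
  obtain ⟨i, t, -, hti, rfl, hd⟩ := hidx u
  have hmi : m < i + 1 := hsm.lt_iff_lt.1 ((hθ.le_iff_le.1 hu).trans_lt hti)
  rwa [hx i (by omega), hfix, dist_comm] at hd

theorem eventually_atBot_dist_lt (h : P.Shadows ε x s z) (hs : ∀ i, s i + 1 ≤ s (i + 1))
    {σ : F} (hfix : ∀ t, P.φ t σ = σ) {m : ℤ} (hx : ∀ i ≤ m, x i = σ) :
    ∀ᶠ u in atBot, dist (P.φ u z) σ < ε := by
  obtain ⟨θ, hθ, hidx⟩ := h.exists_index hs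
  have hsm : StrictMono s := strictMono_int_of_lt_succ fun i => by linarith [hs i]
  filter_upwards [eventually_le_atBot (θ (s m))] with u hu
  obtain ⟨i, t, hit, -, rfl, hd⟩ := hidx u
  rwa [hx i (hsm.le_iff_le.1 (hit.trans (hθ.le_iff_le.1 hu))), hfix, dist_comm] at hd

theorem flow_mem_thickening (h : P.Shadows ε x s z) (hs : ∀ i, s i + 1 ≤ s (i + 1))
    {Λ : Set F} (hinv : P.Invariant Λ) (hx : ∀ i, x i ∈ Λ) (u : ℝ) :
    P.φ u z ∈ Metric.thickening ε Λ := by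
  obtain ⟨θ, -, hidx⟩ := h.exists_index hs
  obtain ⟨i, t, -, -, -, hd⟩ := hidx u
  exact Metric.mem_thickening_iff.2 ⟨_, hinv _ _ (hx i), by rwa [dist_comm]⟩

theorem exists_dist_lt (h : P.Shadows ε x s z) (hs : ∀ i, s i + 1 ≤ s (i + 1)) (n : ℤ) :
    ∃ u, dist (x n) (P.φ u z) < ε := by
  obtain ⟨θ, -, -, hd⟩ := h
  exact ⟨θ (s n), by simpa [P.flow_zero] using hd n (s n) ⟨le_rfl, by linarith [hs n]⟩⟩

end FlowPkg.Shadows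

namespace FlowPkg

variable {F : Type*} [NormedAddCommGroup F] [InnerProductSpace ℝ F] [FiniteDimensional ℝ F]
  {P : FlowPkg F}

theorem exists_pseudoOrbit_shadowed_homoclinic {Λ : Set F} (hΛc : IsCompact Λ)
    (hinv : P.Invariant Λ) (hct : P.ChainTransitive Λ) {σ p : F} (hσ : σ ∈ Λ)
    (hs : HypSing P σ) (hp : p ∈ Λ) (hpσ : p ≠ σ) {U : Set F} (hU : IsOpen U) (hΛU : Λ ⊆ U) :
    ∃ ε > 0, ∀ δ > 0, ∃ (x : ℤ → F) (T s : ℤ → ℝ), (∀ i, x i ∈ Λ) ∧ (∀ i, 1 ≤ T i) ∧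
      (∀ i, dist (P.φ (T i) (x i)) (x (i + 1)) < δ) ∧ s 0 = 0 ∧
      (∀ i, s (i + 1) = s i + T i) ∧
      ∀ z, P.Shadows ε x s z → z ∈ (P.Ws σ ∩ P.Wu σ) \ {σ} ∧ P.orbit z ⊆ U := by
  have hfix := P.flow_eq_self_of_X_eq_zero hs.zero
  obtain ⟨ρs, hρs, hWs⟩ := hs.exists_forall_eventually_dist_le_mem_Ws
  obtain ⟨ρu, hρu, hWu⟩ := hs.exists_forall_eventually_dist_le_mem_Wu
  obtain ⟨εU, hεU, hthick⟩ := hΛc.exists_thickening_subset_open hU hΛU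
  refine ⟨min (min ρs ρu) (min εU (dist p σ)),
    lt_min (lt_min hρs hρu) (lt_min hεU (dist_pos.2 hpσ)), fun δ hδ => ?_⟩
  obtain ⟨x, T, m, n, hxΛ, hT, hjump, hx0, hxm, hxn⟩ :=
    P.exists_homoclinic_pseudoOrbit hct hσ hfix hp hδ
  obtain ⟨s, hs0, hsT⟩ := exists_cumulative_sum T
  have hs1 : ∀ i, s i + 1 ≤ s (i + 1) := fun i => by linarith [hsT i, hT i]
  refine ⟨x, T, s, hxΛ, hT, hjump, hs0, hsT, fun z hz => ⟨⟨⟨?_, ?_⟩, ?_⟩, ?_⟩⟩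
  · refine hWs z ((hz.eventually_atTop_dist_lt hs1 hfix hxm).mono fun u hu => hu.le.trans ?_)
    exact (min_le_left _ _).trans (min_le_left _ _)
  · refine hWu z ((hz.eventually_atBot_dist_lt hs1 hfix hx0).mono fun u hu => hu.le.trans ?_)
    exact (min_le_left _ _).trans (min_le_right _ _)
  · rintro rfl
    obtain ⟨u, hu⟩ := hz.exists_dist_lt hs1 n
    rw [hxn, hfix] at hu
    exact hu.not_ge ((min_le_right _ _).trans (min_le_right _ _))
  · rintro _ ⟨u, rfl⟩
    exact hthick (Metric.thickening_mono ((min_le_right _ _).trans (min_le_left _ _)) _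
      (hz.flow_mem_thickening hs1 hinv hxΛ u))

end FlowPkg

end Homoclinic

/-- a nontrivial chain transitive set with the shadowing property
containing a hyperbolic singularity `σ` has homoclinic points of `σ` with orbit in
any prescribed neighborhood of `Λ`; with intrinsic shadowing they lie in `Λ`. -/
theorem stmt4 {E : Type*} [NormedAddCommGroup E] [InnerProductSpace ℝ E]
    [FiniteDimensional ℝ E] (P : FlowPkg E) (Λ : Set E)
    (hΛc : IsCompact Λ) (hinv : P.Invariant Λ)
    (hct : P.ChainTransitive Λ) (hnt : P.NontrivialSet Λ)
    (σ : E) (hσ : σ ∈ Λ) (hs : HypSing P σ) (hsh : P.ShadowingOn Λ) :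
    ∀ U : Set E, IsOpen U → Λ ⊆ U →
      (∃ x ∈ (P.Ws σ ∩ P.Wu σ) \ {σ}, P.orbit x ⊆ U) ∧
      (P.IntrinsicShadowingOn Λ →
        ∃ x ∈ ((P.Ws σ ∩ P.Wu σ) \ {σ}) ∩ Λ, P.orbit x ⊆ U) := by
  intro U hU hΛU
  obtain ⟨p, hp, hpσ⟩ := hnt.exists_ne hσ (P.flow_eq_self_of_X_eq_zero hs.zero)
  obtain ⟨ε, hε, hpo⟩ :=
    P.exists_pseudoOrbit_shadowed_homoclinic hΛc hinv hct hσ hs hp hpσ hU hΛU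
  refine ⟨?_, fun hish => ?_⟩
  · obtain ⟨δ, hδ, hshadow⟩ := hsh ε hε
    obtain ⟨x, T, s, hxΛ, hT, hjump, hs0, hsT, hhom⟩ := hpo δ hδ
    obtain ⟨z, hz⟩ := hshadow x T s hxΛ hT hjump hs0 hsT
    exact ⟨z, hhom z hz⟩
  · obtain ⟨δ, hδ, hshadow⟩ := hish ε hε
    obtain ⟨x, T, s, hxΛ, hT, hjump, hs0, hsT, hhom⟩ := hpo δ hδ
    obtain ⟨z, hzΛ, hz⟩ := hshadow x T s hxΛ hT hjump hs0 hsT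
    exact ⟨z, ⟨(hhom z hz).1, hzΛ⟩, (hhom z hz).2⟩
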